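/- arXiv:1412.6559 — 2 statements merged into one kernel-verified Lean document; each statement's English description precedes it below -/
import Mathlib

section
/- Let C be a category with pullbacks and R a monad on C^2 whose forgetful functor Alg(R) → C^2 is a discrete pullback-fibration. Then R is isomorphic to a monad over the codomain functor. -/
open CategoryTheory
open CategoryTheory.Limits

universe v u

/-- An (unbundled) algebra structure for a monad on the arrow category. -/
def IsAlgStr {C : Type u} [Category.{v} C] (T : Monad (Arrow C)) {f : Arrow C}
    (a : T.obj f ⟶ f) : Prop :=
  T.η.app f ≫ a = 𝟙 f ∧ T.μ.app f ≫ a = T.map a ≫ a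

/-!
The codomain components of the unit are invertible. Pull the free algebra `T f` back along
`(η_f).right` to an arrow `p`: the lifted algebra structure on `p` makes the projection
`p ⟶ T f` an algebra map through which `η_f` factors, so by freeness it is a split epimorphism,
and its section inverts `(η_f).right`. Replacing the codomain of every `T f` by `f.right` along
these isomorphisms gives an isomorphic monad over `cod`; its multiplication lies over identities
by the unit law `η_{T f} ≫ μ_f = 𝟙`.
-/

namespace CategoryTheory

namespace Monad

variable {D : Type*} [Category* D]

def isoTransport (T : Monad D) {F : D ⥤ D} (i : (T : D ⥤ D) ≅ F) : T ≅ T.transport i :=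
  MonadIso.mk i (fun _ => rfl) (fun X => by simp [transport, ← Functor.map_comp_assoc])

theorem adj_homEquiv_symm_comp_eq_id (T : Monad D) {X : D} {B : T.Algebra}
    (q : B ⟶ T.free.obj X) (τ : X ⟶ T.forget.obj B) (hτ : τ ≫ T.forget.map q = T.η.app X) :
    (T.adj.homEquiv X B).symm τ ≫ q = 𝟙 _ := by
  rw [← Adjunction.homEquiv_naturality_right_symm, Equiv.symm_apply_eq,
    Adjunction.homEquiv_id, Monad.adj_unit]
  exact hτ

theorem unit_comp_adj_homEquiv_symm (T : Monad D) {X : D} {B : T.Algebra}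
    (τ : X ⟶ T.forget.obj B) : T.η.app X ≫ ((T.adj.homEquiv X B).symm τ).f = τ := by
  have h := (T.adj.homEquiv_unit _ _ _).symm.trans ((T.adj.homEquiv X B).apply_symm_apply τ)
  rwa [Monad.adj_unit] at h

theorem mu_app_right_eq_eqToHom {C : Type u} [Category.{v} C] (T : Monad (Arrow C))
    (hobj : ∀ f : Arrow C, (T.obj f).right = f.right)
    (hη : ∀ f : Arrow C, (T.η.app f).right = eqToHom (hobj f).symm) (f : Arrow C) :
    (T.μ.app f).right = eqToHom (hobj (T.obj f)) := by
  have h := congrArg Arrow.Hom.right (T.left_unit f)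
  rw [Arrow.comp_right, hη, Arrow.id_right, eqToHom_comp_iff] at h
  simpa using h

end Monad

namespace Functor

variable {D : Type*} [Category* D] {C : Type u} [Category.{v} C]

def arrowWithRight (F : D ⥤ Arrow C) {G : D ⥤ C} (e : F ⋙ Arrow.rightFunc ≅ G) :
    D ⥤ Arrow C where
  obj X := Arrow.mk ((F.obj X).hom ≫ e.hom.app X)
  map φ := Arrow.homMk (F.map φ).left (G.map φ) <|
    (Arrow.w_assoc (F.map φ) _).trans
      ((congrArg _ (e.hom.naturality φ)).trans (Category.assoc _ _ _).symm)

def isoArrowWithRight (F : D ⥤ Arrow C) {G : D ⥤ C} (e : F ⋙ Arrow.rightFunc ≅ G) :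
    F ≅ F.arrowWithRight e :=
  NatIso.ofComponents (fun X => Arrow.isoMk (Iso.refl _) (e.app X) (Category.id_comp _))
    fun φ => by
      ext
      · exact (Category.comp_id _).trans (Category.id_comp _).symm
      · exact e.hom.naturality φ

end Functor

end CategoryTheory

section

variable {C : Type u} [Category.{v} C]

def IsAlgStr.toAlgebra {T : Monad (Arrow C)} {f : Arrow C} {a : T.obj f ⟶ f}
    (ha : IsAlgStr T a) : T.Algebra :=
  ⟨f, a, ha.1, ha.2⟩

theorem isIso_unit_app_right_of_pullback_algebras [HasPullbacks C] (T : Monad (Arrow C))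
    (hlift : ∀ (g : Arrow C) (a : T.obj g ⟶ g), IsAlgStr T a →
      ∀ (f : Arrow C) (sq : f ⟶ g), IsPullback sq.left f.hom g.hom sq.right →
        ∃ b : T.obj f ⟶ f, IsAlgStr T b ∧ T.map sq ≫ a = b ≫ sq)
    (f : Arrow C) : IsIso (T.η.app f).right := by
  let v := (T.η.app f).right
  let p := Arrow.mk (pullback.snd (T.obj f).hom v)
  let sq : p ⟶ T.obj f := Arrow.homMk (pullback.fst _ _) v pullback.condition
  obtain ⟨b, hb, hq⟩ := hlift (T.obj f) (T.μ.app f) ⟨T.left_unit f, (T.assoc f).symm⟩ p sq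
    (IsPullback.of_hasPullback _ _)
  let q : hb.toAlgebra ⟶ T.free.obj f := ⟨sq, hq⟩
  let τ : f ⟶ p := Arrow.homMk (pullback.lift (T.η.app f).left f.hom (Arrow.w _)) (𝟙 _)
    ((pullback.lift_snd _ _ _).trans (Category.comp_id _).symm)
  have hτ : τ ≫ sq = T.η.app f := by
    ext
    · exact pullback.lift_fst _ _ _
    · exact Category.id_comp _
  let s := (T.adj.homEquiv f hb.toAlgebra).symm τ
  have hsection : (s ≫ q).f.right = 𝟙 _ :=
    congrArg (·.f.right) (T.adj_homEquiv_symm_comp_eq_id q τ hτ)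
  have hsη : T.η.app f ≫ s.f = τ := T.unit_comp_adj_homEquiv_symm (B := hb.toAlgebra) τ
  exact ⟨s.f.right, congrArg Arrow.Hom.right hsη, hsection⟩

end

/-- Let `C` have pullbacks and `R` be a monad on `C²` whose forgetful functor
`Alg(R) → C²` is a discrete pullback-fibration (every `R`-algebra structure lifts uniquely
and cartesianly along pullback squares).  Then `R` is isomorphic to a monad over the
codomain functor. -/
theorem monad_over_codomain_of_discrete_pullback_fibration
    {C : Type u} [Category.{v} C] [HasPullbacks C] (T : Monad (Arrow C))
    (hdpf : ∀ (g : Arrow C) (a : T.obj g ⟶ g), IsAlgStr T a →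
      ∀ (f : Arrow C) (sq : f ⟶ g), IsPullback sq.left f.hom g.hom sq.right →
        (∃! b : T.obj f ⟶ f, IsAlgStr T b ∧ T.map sq ≫ a = b ≫ sq) ∧
        (∀ b : T.obj f ⟶ f, IsAlgStr T b → T.map sq ≫ a = b ≫ sq →
          ∀ (e : Arrow C) (c : T.obj e ⟶ e), IsAlgStr T c →
            ∀ ρ : e ⟶ g, T.map ρ ≫ a = c ≫ ρ →
              ∀ τ : e ⟶ f, τ ≫ sq = ρ → T.map τ ≫ b = c ≫ τ)) :
    ∃ (T' : Monad (Arrow C)) (_ : T ≅ T')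
        (hobj : ∀ f : Arrow C, (T'.obj f).right = f.right),
      (∀ {f g : Arrow C} (φ : f ⟶ g),
        (T'.map φ).right = eqToHom (hobj f) ≫ φ.right ≫ eqToHom (hobj g).symm) ∧
      (∀ f : Arrow C, (T'.η.app f).right = eqToHom (hobj f).symm) ∧
      (∀ f : Arrow C, (T'.μ.app f).right = eqToHom (hobj (T'.obj f))) := by
  let ηRight : Arrow.rightFunc ⟶ T.toFunctor ⋙ Arrow.rightFunc :=
    Functor.whiskerRight T.η Arrow.rightFunc
  have : ∀ f, IsIso (ηRight.app f) := isIso_unit_app_right_of_pullback_algebras T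
    fun g a ha f sq hpb => (hdpf g a ha f sq hpb).1.exists
  have : IsIso ηRight := NatIso.isIso_of_isIso_app ηRight
  let T' := T.transport (T.toFunctor.isoArrowWithRight (asIso ηRight).symm)
  have hη : ∀ f, (T'.η.app f).right = 𝟙 f.right := fun f =>
    (NatTrans.comp_app ηRight (inv ηRight) f).symm.trans (by rw [IsIso.hom_inv_id]; rfl)
  refine ⟨T', T.isoTransport _, fun _ => rfl, fun φ => ?_, hη,
    T'.mu_app_right_eq_eqToHom (fun _ => rfl) hη⟩
  exact ((Category.id_comp _).trans (Category.comp_id _)).symm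
end

section
/- Let B be the category freely generated by a single idempotent t (one object, morphisms 1 and t with t∘t = t), and let A be B with a terminal object freely adjoined. Then A has a terminal object, the inclusion B → A admits a retraction r : A → B (fixing t and sending the unique map 0 → 1 to the identity on 0), but B has no terminal object. -/
open CategoryTheory
open CategoryTheory.Limits

/-- The category freely generated by a single idempotent `t` (`t ∘ t = t`): the one-object
category on the two-element monoid `{1, t}` with idempotent `t`. -/
abbrev FreeIdempotent : Type := CategoryTheory.SingleObj (WithOne PUnit.{1})

/-!
Sending the adjoined terminal object to the unique object of `B` and every map into it to `t`
is a functor because `t` absorbs every morphism of `B` on the right (`t * 1 = t * t = t`), and it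
is the identity on `B`. On the other hand `B` cannot have a terminal object: its only object has
the two distinct endomorphisms `1` and `t`.
-/

namespace CategoryTheory

theorem WithTerminal.exists_retraction_incl {C : Type*} [Category* C] {Z : C}
    (π : ∀ X : C, X ⟶ Z) (hπ : ∀ (X Y : C) (f : X ⟶ Y), f ≫ π Y = π X) :
    ∃ r : WithTerminal C ⥤ C, WithTerminal.incl ⋙ r = 𝟭 C :=
  ⟨WithTerminal.lift (𝟭 C) π hπ, rfl⟩

namespace SingleObj

variable {M : Type*} [Monoid M]

theorem exists_retraction_withTerminal_incl {z : M} (hz : ∀ m : M, z * m = z) :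
    ∃ r : WithTerminal (SingleObj M) ⥤ SingleObj M, WithTerminal.incl ⋙ r = 𝟭 (SingleObj M) :=
  WithTerminal.exists_retraction_incl (Z := star M) (fun _ => z) fun _ _ f => hz f

theorem subsingleton_of_hasTerminal [HasTerminal (SingleObj M)] : Subsingleton M :=
  ⟨fun m n => (terminalIsTerminal : IsTerminal (⊤_ SingleObj M)).hom_ext
    (show star M ⟶ star M from m) n⟩

theorem not_hasTerminal [Nontrivial M] : ¬ HasTerminal (SingleObj M) := fun _ =>
  not_subsingleton M subsingleton_of_hasTerminal

end SingleObj

end CategoryTheory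

theorem FreeIdempotent.idempotent_mul (m : WithOne PUnit.{1}) :
    ((PUnit.unit : PUnit) : WithOne PUnit.{1}) * m = (PUnit.unit : PUnit) := by
  cases m <;> rfl

/-- Let `B` be the free category on one idempotent and `A` the category obtained from `B`
by freely adjoining a terminal object.  Then `A` has a terminal object, the inclusion
`B ⥤ A` admits a retraction, but `B` has no terminal object. -/
theorem free_idempotent_retract_no_terminal :
    HasTerminal (WithTerminal FreeIdempotent) ∧
    (∃ r : WithTerminal FreeIdempotent ⥤ FreeIdempotent,
      WithTerminal.incl ⋙ r = 𝟭 FreeIdempotent) ∧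
    ¬ HasTerminal FreeIdempotent :=
  ⟨inferInstance, SingleObj.exists_retraction_withTerminal_incl FreeIdempotent.idempotent_mul,
    SingleObj.not_hasTerminal⟩
end
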